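/- arXiv:2005.08292 — 6 statements merged into one kernel-verified Lean document; each statement's English description precedes it below -/
import Mathlib

section
/- There exists an integer n₀ such that for all integers n ≥ n₀ one has I(n) < I(n+1). -/
open MeasureTheory Real

/-- `I n = (2√n/π) ∫₀^∞ ((sin t)/t)^n dt`. -/
noncomputable def I (n : ℕ) : ℝ :=
  2 * Real.sqrt n / Real.pi * ∫ t in Set.Ioi (0 : ℝ), (Real.sin t / t) ^ n

/-!
Substituting `t = s / √n` gives `I n = (2/π) ∫₀^∞ Gₙ(s) ds` with
`Gₙ(s) = (sin (s/√n) / (s/√n))ⁿ`, and `Gₙ(s) = exp (-s² F(s/√n))` for `0 < s < π√n`,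
where `F x = -log (sin x / x) / x²`. Euler's product writes `-log (sin x / x)` as
`∑ₖ -log (1 - x² / (π²(k+1)²))`; expanding each term as a power series in `x²` shows that
`F` is increasing on `(0, π)`, with `F y - F x ≥ (y² - x²) / (2π⁴)`. Since
`s/√(n+1) < s/√n`, this gives `Gₙ ≤ Gₙ₊₁` on `(0, π√n]`, with a gain of order `1/n²` on
`[1, 3/2]`, while the integrals of `Gₙ` and `Gₙ₊₁` beyond `π√n` are `O(π⁻ⁿ)`.
-/

open Set Filter Topology

theorem hasSum_add_le_of_le {ι α : Type*} [DecidableEq ι] [AddCommMonoid α] [PartialOrder α]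
    [IsOrderedAddMonoid α] [TopologicalSpace α] [OrderClosedTopology α] [ContinuousAdd α]
    {f g : ι → α} {a b c : α} {i : ι} (h : ∀ j, f j ≤ g j) (hi : f i + c ≤ g i)
    (hf : HasSum f a) (hg : HasSum g b) : a + c ≤ b := by
  refine hasSum_le (fun j => ?_) (hf.add (hasSum_pi_single i c)) hg
  rcases eq_or_ne j i with rfl | hj
  · simpa using hi
  · simpa [Pi.single_eq_of_ne hj] using h j

theorem hasSum_neg_log_one_sub_div_div {a u : ℝ} (hu : 0 < u) (hua : u < a) :
    HasSum (fun n : ℕ => u ^ n / ((n + 1) * a ^ (n + 1))) (-log (1 - u / a) / u) := by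
  have ha : 0 < a := hu.trans hua
  have hv : |u / a| < 1 := by
    rw [abs_of_pos (div_pos hu ha)]; exact (div_lt_one ha).mpr hua
  refine ((hasSum_pow_div_log_of_abs_lt_one hv).div_const u).congr_fun fun n => ?_
  rw [div_pow, pow_succ u]
  field_simp

theorem neg_log_one_sub_div_div_add_le {a u v : ℝ} (hu : 0 < u) (huv : u ≤ v) (hva : v < a) :
    -log (1 - u / a) / u + (v - u) / (2 * a ^ 2) ≤ -log (1 - v / a) / v := by
  have ha : 0 < a := (hu.trans_le huv).trans hva
  refine hasSum_add_le_of_le (i := 1) (fun n => ?_) ?_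
    (hasSum_neg_log_one_sub_div_div hu (huv.trans_lt hva))
    (hasSum_neg_log_one_sub_div_div (hu.trans_le huv) hva)
  · gcongr
  · exact le_of_eq (by push_cast; ring)

theorem sq_lt_pi_sq_mul_add_one_sq {x : ℝ} (hx : 0 ≤ x) (hxπ : x < π) (k : ℕ) :
    x ^ 2 < π ^ 2 * (k + 1) ^ 2 :=
  (pow_lt_pow_left₀ hxπ hx two_ne_zero).trans_le
    (le_mul_of_one_le_right (sq_nonneg π) (one_le_pow₀ (by simp)))

theorem hasSum_neg_log_one_sub_sq_div {x : ℝ} (hx : 0 < x) (hxπ : x < π) :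
    HasSum (fun k : ℕ => -log (1 - x ^ 2 / (π ^ 2 * (k + 1) ^ 2))) (-log (sin x / x)) := by
  have hfactor_pos (k : ℕ) : 0 < 1 - x ^ 2 / (π ^ 2 * (k + 1) ^ 2) := by
    rw [sub_pos, div_lt_one (by positivity)]
    exact sq_lt_pi_sq_mul_add_one_sq hx.le hxπ k
  have hfactor_le_one (k : ℕ) : 1 - x ^ 2 / (π ^ 2 * (k + 1) ^ 2) ≤ 1 :=
    sub_le_self _ (by positivity)
  rw [hasSum_iff_tendsto_nat_of_nonneg fun k =>
    neg_nonneg.mpr (log_nonpos (hfactor_pos k).le (hfactor_le_one k))]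
  have hprod : Tendsto
      (fun N : ℕ => ∏ k ∈ Finset.range N, (1 - x ^ 2 / (π ^ 2 * (k + 1) ^ 2)))
      atTop (𝓝 (sin x / x)) := by
    have := (tendsto_euler_sin_prod (x / π)).div_const x
    rw [mul_div_cancel₀ x pi_ne_zero] at this
    convert this using 2 with N
    rw [mul_div_cancel_left₀ _ hx.ne']
    congr! 2 with k
    rw [div_pow, div_div]
  have hsinc : 0 < sin x / x := div_pos (sin_pos_of_pos_of_lt_pi hx hxπ) hx
  convert ((continuousAt_log hsinc.ne').tendsto.comp hprod).neg using 2 with N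
  simp [log_prod fun k _ => (hfactor_pos k).ne']

noncomputable def negLogSincDivSq (x : ℝ) : ℝ := -log (sin x / x) / x ^ 2

theorem negLogSincDivSq_add_le {x y : ℝ} (hx : 0 < x) (hxy : x ≤ y) (hyπ : y < π) :
    negLogSincDivSq x + (y ^ 2 - x ^ 2) / (2 * π ^ 4) ≤ negLogSincDivSq y := by
  have hy : 0 < y := hx.trans_le hxy
  have hsq : x ^ 2 ≤ y ^ 2 := pow_le_pow_left₀ hx.le hxy 2
  have hterm (k : ℕ) := neg_log_one_sub_div_div_add_le (pow_pos hx 2) hsq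
    (sq_lt_pi_sq_mul_add_one_sq hy.le hyπ k)
  refine hasSum_add_le_of_le (i := 0) (fun k => ?_) ?_
    ((hasSum_neg_log_one_sub_sq_div hx (hxy.trans_lt hyπ)).div_const _)
    ((hasSum_neg_log_one_sub_sq_div hy hyπ).div_const _)
  · refine le_trans (le_add_of_nonneg_right ?_) (hterm k)
    exact div_nonneg (sub_nonneg.mpr hsq) (by positivity)
  · simpa [← pow_mul] using hterm 0

noncomputable def scaledSincPow (n : ℕ) (s : ℝ) : ℝ := (sin (s / √n) / (s / √n)) ^ n

theorem scaledSincPow_eq_exp {n : ℕ} {s : ℝ} (hs : 0 < s) (hsπ : s < π * √n) :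
    scaledSincPow n s = exp (-s ^ 2 * negLogSincDivSq (s / √n)) := by
  have hn : 0 < √n := pos_of_mul_pos_right (hs.trans hsπ) pi_pos.le
  have hy : 0 < s / √n := div_pos hs hn
  have hsinc : 0 < sin (s / √n) / (s / √n) :=
    div_pos (sin_pos_of_pos_of_lt_pi hy ((div_lt_iff₀ hn).mpr (by linarith))) hy
  have hs_sq : s ^ 2 = n * (s / √n) ^ 2 := by
    rw [div_pow, sq_sqrt n.cast_nonneg, mul_div_cancel₀ _ (sqrt_pos.mp hn).ne']
  rw [scaledSincPow, ← exp_log hsinc, ← exp_nat_mul, negLogSincDivSq, hs_sq]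
  field_simp

theorem scaledSincPow_nonneg {n : ℕ} {s : ℝ} (hs : 0 ≤ s) (hsπ : s ≤ π * √n) :
    0 ≤ scaledSincPow n s := by
  have hy : 0 ≤ s / √n := div_nonneg hs (sqrt_nonneg _)
  have hyπ : s / √n ≤ π := div_le_of_le_mul₀ (sqrt_nonneg _) pi_pos.le hsπ
  exact pow_nonneg (div_nonneg (sin_nonneg_of_nonneg_of_le_pi hy hyπ) hy) n

theorem scaledSincPow_mul_exp_le_succ {n : ℕ} {s : ℝ} (hs : 0 < s) (hsπ : s < π * √n) :
    scaledSincPow n s * exp (s ^ 4 / (2 * π ^ 4 * (n * (n + 1)))) ≤ scaledSincPow (n + 1) s := by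
  have hn : 0 < √n := pos_of_mul_pos_right (hs.trans hsπ) pi_pos.le
  have hn_pos : (0 : ℝ) < n := sqrt_pos.mp hn
  have hsqrt_lt : √n < √(n + 1 : ℕ) := sqrt_lt_sqrt n.cast_nonneg (by push_cast; linarith)
  have hx : 0 < s / √(n + 1 : ℕ) := div_pos hs (hn.trans hsqrt_lt)
  have hxy : s / √(n + 1 : ℕ) ≤ s / √n := div_le_div_of_nonneg_left hs.le hn hsqrt_lt.le
  have hyπ : s / √n < π := (div_lt_iff₀ hn).mpr (by linarith)
  have hgain := negLogSincDivSq_add_le hx hxy hyπ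
  have hsq_sub : (s / √n) ^ 2 - (s / √(n + 1 : ℕ)) ^ 2 = s ^ 2 / (n * (n + 1)) := by
    rw [div_pow, div_pow, sq_sqrt n.cast_nonneg, sq_sqrt (n + 1 : ℕ).cast_nonneg]
    push_cast
    field_simp
    ring
  rw [scaledSincPow_eq_exp hs hsπ,
    scaledSincPow_eq_exp hs (hsπ.trans_le (by gcongr)), ← exp_add, exp_le_exp]
  rw [hsq_sub] at hgain
  have := mul_le_mul_of_nonneg_left hgain (sq_nonneg s)
  have hδ : s ^ 4 / (2 * π ^ 4 * (n * (n + 1)))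
      = s ^ 2 * (s ^ 2 / (n * (n + 1)) / (2 * π ^ 4)) := by
    field_simp
  rw [hδ]
  linarith

theorem scaledSincPow_le_succ {n : ℕ} {s : ℝ} (hs : 0 < s) (hsπ : s ≤ π * √n) :
    scaledSincPow n s ≤ scaledSincPow (n + 1) s := by
  rcases hsπ.lt_or_eq with hsπ | rfl
  · exact le_trans (le_mul_of_one_le_right (scaledSincPow_nonneg hs.le hsπ.le)
      (one_le_exp (by positivity))) (scaledSincPow_mul_exp_le_succ hs hsπ)
  · have hn : 0 < √n := pos_of_mul_pos_right hs pi_pos.le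
    have hn_ne : n ≠ 0 := by rintro rfl; simp at hn
    rw [scaledSincPow, mul_div_cancel_right₀ _ hn.ne', sin_pi, zero_div, zero_pow hn_ne]
    exact scaledSincPow_nonneg hs.le (by gcongr; simp)

theorem two_div_pi_le_scaledSincPow {n : ℕ} (hn : n ≠ 0) {s : ℝ} (hs : 0 < s)
    (hsπ : s ≤ π / 2) :
    2 / π ≤ scaledSincPow n s := by
  induction n, Nat.one_le_iff_ne_zero.mpr hn using Nat.le_induction with
  | base =>
    rw [scaledSincPow, Nat.cast_one, sqrt_one, div_one, pow_one, le_div_iff₀ hs]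
    exact mul_le_sin hs.le hsπ
  | succ k hk ih =>
    refine (ih (by omega)).trans (scaledSincPow_le_succ hs ?_)
    have : 1 ≤ √k := one_le_sqrt.mpr (by exact_mod_cast hk)
    nlinarith [pi_pos]

theorem scaledSincPow_add_le_succ {n : ℕ} (hn : n ≠ 0) {s : ℝ} (hs : 1 ≤ s)
    (hsπ : s ≤ π / 2) :
    scaledSincPow n s + 1 / (π ^ 5 * (n * (n + 1))) ≤ scaledSincPow (n + 1) s := by
  have hs0 : 0 < s := one_pos.trans_le hs
  have hsπ' : s < π * √n := by
    have : 1 ≤ √n := one_le_sqrt.mpr (by exact_mod_cast Nat.one_le_iff_ne_zero.mpr hn)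
    nlinarith [pi_pos]
  have hG := two_div_pi_le_scaledSincPow hn hs0 hsπ
  have hG_nonneg : 0 ≤ scaledSincPow n s := (by positivity : (0:ℝ) ≤ 2 / π).trans hG
  have hδ : 1 / (2 * π ^ 4 * (n * (n + 1))) ≤ s ^ 4 / (2 * π ^ 4 * (n * (n + 1))) := by
    gcongr; exact one_le_pow₀ hs
  calc scaledSincPow n s + 1 / (π ^ 5 * (n * (n + 1)))
      ≤ scaledSincPow n s + scaledSincPow n s * (s ^ 4 / (2 * π ^ 4 * (n * (n + 1)))) := by
        have h : 1 / (π ^ 5 * (n * (n + 1))) = 2 / π * (1 / (2 * π ^ 4 * (n * (n + 1)))) := by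
          field_simp
        rw [h]
        gcongr
    _ ≤ scaledSincPow n s * exp (s ^ 4 / (2 * π ^ 4 * (n * (n + 1)))) := by
        rw [← mul_one_add, add_comm]
        exact mul_le_mul_of_nonneg_left (add_one_le_exp _) hG_nonneg
    _ ≤ _ := scaledSincPow_mul_exp_le_succ hs0 hsπ'

theorem abs_sin_div_pow_le_rpow_neg (n : ℕ) {t : ℝ} (ht : 0 < t) :
    |(sin t / t) ^ n| ≤ t ^ (-(n : ℝ)) := by
  rw [rpow_neg ht.le, rpow_natCast, abs_pow, abs_div, abs_of_pos ht, ← inv_pow, ← one_div]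
  gcongr
  exact abs_sin_le_one t

theorem integrableOn_sin_div_pow {n : ℕ} (hn : 2 ≤ n) :
    IntegrableOn (fun t => (sin t / t) ^ n) (Ioi 0) := by
  have hmeas : AEStronglyMeasurable (fun t : ℝ => (sin t / t) ^ n) :=
    (by fun_prop : Measurable fun t : ℝ => (sin t / t) ^ n).aestronglyMeasurable
  rw [← Ioc_union_Ioi_eq_Ioi zero_le_one]
  refine IntegrableOn.union ?_ ?_
  · refine Measure.integrableOn_of_bounded (M := 1) (by simp) hmeas
      (ae_of_all _ fun t => ?_)
    rw [norm_pow, norm_div]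
    exact pow_le_one₀ (by positivity) (div_le_one_of_le₀ abs_sin_le_abs (abs_nonneg t))
  · have hlt : -(n : ℝ) < -1 := by
      have : (2 : ℝ) ≤ n := by exact_mod_cast hn
      linarith
    refine (integrableOn_Ioi_rpow_of_lt hlt one_pos).mono' hmeas.restrict
      ((ae_restrict_iff' measurableSet_Ioi).mpr (ae_of_all _ fun t ht => ?_))
    exact abs_sin_div_pow_le_rpow_neg n (one_pos.trans ht)

theorem abs_setIntegral_Ioi_sin_div_pow_le {n : ℕ} (hn : 2 ≤ n) {c : ℝ} (hc : 0 < c) :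
    |∫ t in Ioi c, (sin t / t) ^ n| ≤ c ^ (1 - n : ℝ) / (n - 1) := by
  have hlt : -(n : ℝ) < -1 := by
    have : (2 : ℝ) ≤ n := by exact_mod_cast hn
    linarith
  calc |∫ t in Ioi c, (sin t / t) ^ n|
      ≤ ∫ t in Ioi c, t ^ (-(n : ℝ)) := by
        rw [← norm_eq_abs]
        exact norm_integral_le_of_norm_le (integrableOn_Ioi_rpow_of_lt hlt hc)
          ((ae_restrict_iff' measurableSet_Ioi).mpr (ae_of_all _ fun t ht =>
            abs_sin_div_pow_le_rpow_neg n (hc.trans ht)))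
    _ = c ^ (1 - n : ℝ) / (n - 1) := by
        rw [integral_Ioi_rpow_of_lt hlt hc, ← neg_div_neg_eq, neg_neg, neg_add_eq_sub]
        ring_nf

theorem setIntegral_Ioi_mul_sqrt_scaledSincPow {n : ℕ} (hn : n ≠ 0) (c : ℝ) :
    ∫ s in Ioi (c * √n), scaledSincPow n s = √n * ∫ t in Ioi c, (sin t / t) ^ n := by
  have hsqrt : 0 < √n := sqrt_pos.mpr (by positivity)
  have := integral_comp_mul_left_Ioi (fun t => (sin t / t) ^ n) (c * √n) (inv_pos.mpr hsqrt)
  simp only [inv_mul_eq_div, mul_div_cancel_right₀ _ hsqrt.ne', inv_inv, smul_eq_mul] at this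
  exact this

theorem integrableOn_scaledSincPow {n : ℕ} (hn : 2 ≤ n) :
    IntegrableOn (scaledSincPow n) (Ioi 0) := by
  have hsqrt : 0 < √n := sqrt_pos.mpr (by positivity)
  have := (integrableOn_Ioi_comp_mul_left_iff (fun t => (sin t / t) ^ n) 0
    (inv_pos.mpr hsqrt)).mpr (by simpa using integrableOn_sin_div_pow hn)
  unfold scaledSincPow
  simpa only [inv_mul_eq_div] using this

theorem I_eq_setIntegral_scaledSincPow {n : ℕ} (hn : n ≠ 0) :
    I n = 2 / π * ∫ s in Ioi 0, scaledSincPow n s := by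
  have := setIntegral_Ioi_mul_sqrt_scaledSincPow hn 0
  rw [zero_mul] at this
  rw [I, this]
  ring

theorem abs_setIntegral_Ioi_pi_mul_sqrt_scaledSincPow_le {n : ℕ} (hn : 3 ≤ n) :
    |∫ s in Ioi (π * √n), scaledSincPow n s| ≤ π / π ^ n := by
  have hn' : (3 : ℝ) ≤ n := by exact_mod_cast hn
  have hsqrt_le : √n ≤ n - 1 := by
    rw [sqrt_le_left (by linarith)]; nlinarith
  rw [setIntegral_Ioi_mul_sqrt_scaledSincPow (by omega), abs_mul, abs_of_nonneg (sqrt_nonneg _)]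
  calc √n * |∫ t in Ioi π, (sin t / t) ^ n|
      ≤ (n - 1) * (π ^ (1 - n : ℝ) / (n - 1)) :=
        mul_le_mul hsqrt_le (abs_setIntegral_Ioi_sin_div_pow_le (by omega) pi_pos)
          (abs_nonneg _) (by linarith)
    _ = π / π ^ n := by
        rw [mul_div_cancel₀ _ (by linarith), rpow_sub pi_pos, rpow_one, rpow_natCast]

theorem intervalIntegrable_scaledSincPow {n : ℕ} (hn : 2 ≤ n) {b : ℝ} (hb : 0 ≤ b) :
    IntervalIntegrable (scaledSincPow n) volume 0 b :=
  (intervalIntegrable_iff_integrableOn_Ioc_of_le hb).mpr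
    ((integrableOn_scaledSincPow hn).mono_set Ioc_subset_Ioi_self)

theorem intervalIntegral_scaledSincPow_add_le_succ {n : ℕ} (hn : 2 ≤ n) :
    (∫ s in 0..π * √n, scaledSincPow n s) + 1 / (2 * π ^ 5 * (n * (n + 1)))
      ≤ ∫ s in 0..π * √n, scaledSincPow (n + 1) s := by
  have hsqrt : 1 ≤ √n := one_le_sqrt.mpr (by exact_mod_cast (by omega : 1 ≤ n))
  have hπ := pi_gt_three
  have ha : 3 / 2 ≤ π * √n := by nlinarith
  have hdiff := (intervalIntegrable_scaledSincPow (n := n + 1) (by omega) (b := π * √n)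
    (by linarith)).sub (intervalIntegrable_scaledSincPow hn (by linarith))
  have hgain : 1 / (2 * π ^ 5 * (n * (n + 1)))
      ≤ ∫ s in 1..3 / 2, (scaledSincPow (n + 1) s - scaledSincPow n s) := by
    calc 1 / (2 * π ^ 5 * (n * (n + 1)))
        = ∫ _ in (1 : ℝ)..3 / 2, 1 / (π ^ 5 * (n * (n + 1))) := by
          rw [intervalIntegral.integral_const, smul_eq_mul]; field_simp; ring
      _ ≤ _ := intervalIntegral.integral_mono_on (by norm_num) (by simp)
          (hdiff.mono_set ((uIcc_of_le (by norm_num)).trans_subset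
            ((Icc_subset_Icc (by norm_num) ha).trans Icc_subset_uIcc)))
          fun s hs => by
            linarith [scaledSincPow_add_le_succ (by omega : n ≠ 0) hs.1 (by linarith [hs.2])]
  have hmono : ∫ s in 1..3 / 2, (scaledSincPow (n + 1) s - scaledSincPow n s)
      ≤ ∫ s in 0..π * √n, (scaledSincPow (n + 1) s - scaledSincPow n s) :=
    intervalIntegral.integral_mono_interval (by norm_num) (by norm_num) ha
      ((ae_restrict_iff' measurableSet_Ioc).mpr (ae_of_all _ fun s hs =>
        sub_nonneg.mpr (scaledSincPow_le_succ hs.1 hs.2))) hdiff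
  rw [intervalIntegral.integral_sub (intervalIntegrable_scaledSincPow (by omega) (by linarith))
    (intervalIntegrable_scaledSincPow hn (by linarith))] at hmono
  linarith

theorem setIntegral_Ioi_scaledSincPow_add_le_succ {n : ℕ} (hn : 3 ≤ n) :
    (∫ s in Ioi 0, scaledSincPow n s) + (1 / (2 * π ^ 5 * (n * (n + 1))) - 2 * π / π ^ n)
      ≤ ∫ s in Ioi 0, scaledSincPow (n + 1) s := by
  have hsqrt_le : √n ≤ √(n + 1 : ℕ) := sqrt_le_sqrt (by push_cast; linarith)
  have hint (k : ℕ) (hk : 2 ≤ k) (c : ℝ) (hc : 0 ≤ c) :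
      IntegrableOn (scaledSincPow k) (Ioi c) :=
    (integrableOn_scaledSincPow hk).mono_set (Ioi_subset_Ioi hc)
  have hsplit_n := intervalIntegral.integral_interval_add_Ioi (hint n (by omega) 0 le_rfl)
    (hint n (by omega) (π * √n) (by positivity))
  have hsplit_succ := intervalIntegral.integral_interval_add_Ioi (hint (n + 1) (by omega) 0 le_rfl)
    (hint (n + 1) (by omega) (π * √n) (by positivity))
  have hsplit_tail := intervalIntegral.integral_interval_add_Ioi
    (hint (n + 1) (by omega) (π * √n) (by positivity))
    (hint (n + 1) (by omega) (π * √(n + 1 : ℕ)) (by positivity))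
  have hmiddle : 0 ≤ ∫ s in π * √n..π * √(n + 1 : ℕ), scaledSincPow (n + 1) s :=
    intervalIntegral.integral_nonneg (by gcongr) fun s hs =>
      scaledSincPow_nonneg ((by positivity : 0 ≤ π * √n).trans hs.1) hs.2
  have htail_n := abs_le.mp (abs_setIntegral_Ioi_pi_mul_sqrt_scaledSincPow_le hn)
  have htail_succ := abs_le.mp
    (abs_setIntegral_Ioi_pi_mul_sqrt_scaledSincPow_le (n := n + 1) (by omega))
  have hpow : π / π ^ (n + 1) ≤ π / π ^ n := by
    gcongr
    · linarith [pi_gt_three]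
    · exact n.le_succ
  have hbulk := intervalIntegral_scaledSincPow_add_le_succ (n := n) (by omega)
  have htwo : 2 * π / π ^ n = π / π ^ n + π / π ^ n := by ring
  linarith [htail_n.2, htail_succ.1]

theorem eventually_two_pi_div_pow_lt :
    ∀ᶠ n : ℕ in atTop, 2 * π / π ^ n < 1 / (2 * π ^ 5 * (n * (n + 1))) := by
  have hlim := tendsto_pow_const_div_const_pow_of_one_lt 2 (by linarith [pi_gt_three])
  filter_upwards [(tendsto_order.1 hlim).2 (1 / (8 * π ^ 6)) (by positivity),
    eventually_ge_atTop 1] with n hsmall hn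
  have hn' : (1 : ℝ) ≤ n := by exact_mod_cast hn
  have hpow : 0 < π ^ n := by positivity
  rw [div_lt_div_iff₀ hpow (by positivity)]
  rw [div_lt_div_iff₀ hpow (by positivity)] at hsmall
  nlinarith [pi_pos]

/-- There exists an integer `n₀` such that `I (n) < I (n+1)` for all `n ≥ n₀`. -/
theorem I_eventually_strict_mono : ∃ n₀ : ℕ, ∀ n : ℕ, n₀ ≤ n → I n < I (n + 1) := by
  obtain ⟨n₀, hn₀⟩ := eventually_atTop.mp eventually_two_pi_div_pow_lt
  refine ⟨max n₀ 3, fun n hn => ?_⟩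
  have hgap := hn₀ n (le_of_max_le_left hn)
  have hstep := setIntegral_Ioi_scaledSincPow_add_le_succ (le_of_max_le_right hn)
  rw [I_eq_setIntegral_scaledSincPow (by omega), I_eq_setIntegral_scaledSincPow (by omega)]
  gcongr
  linarith
end

section
/- I(n) = (2√n/π) ∫₀^∞ ((sin t)/t)^n dt tends to √(6/π) as n → ∞; consequently the upper bound √(6/π) for I(n) is best possible. -/
/-!
Laplace's method. Since `sinc t = 1 - t²/6 + O(t⁴)`, after the substitution `t = s/√n` the
integrand `sinc (s/√n) ^ n` tends to `exp (-s²/6)`; for `s/√n ≤ π` it is dominated by a Gaussian,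
because there `sinc u = sinc (u/2) cos (u/2) ≤ cos (u/2) ≤ 1 - u²/(2π²)`. Beyond `π`,
`|sinc t| ^ n ≤ π^(2-n) t⁻²` makes the tail exponentially small. Hence
`√n ∫₀^∞ sinc t ^ n dt → ∫₀^∞ exp (-s²/6) ds = √(6π)/2`.
-/

open MeasureTheory Real Filter

open Set

namespace Real

lemma sinc_eq_sinc_half_mul_cos_half (u : ℝ) : sinc u = sinc (u / 2) * cos (u / 2) := by
  rcases eq_or_ne u 0 with rfl | hu
  · simp
  rw [sinc_of_ne_zero hu, sinc_of_ne_zero (by positivity)]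
  conv_lhs => rw [← mul_div_cancel₀ u two_ne_zero, sin_two_mul]
  field_simp

lemma sinc_abs (u : ℝ) : sinc |u| = sinc u := by
  rcases abs_choice u with h | h <;> simp [h]

lemma sinc_nonneg {u : ℝ} (hu : |u| ≤ π) : 0 ≤ sinc u := by
  rw [← sinc_abs, sinc_apply]
  split_ifs
  · exact zero_le_one
  · exact div_nonneg (sin_nonneg_of_nonneg_of_le_pi (abs_nonneg u) hu) (abs_nonneg u)

lemma sinc_le_cos_half {u : ℝ} (hu : |u| ≤ π) : sinc u ≤ cos (u / 2) := by
  have hcos : 0 ≤ cos (u / 2) := cos_nonneg_of_mem_Icc ⟨by grind [abs_le], by grind [abs_le]⟩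
  rw [sinc_eq_sinc_half_mul_cos_half]
  exact mul_le_of_le_one_left hcos (sinc_le_one _)

lemma abs_sinc_le_exp_neg_sq {u : ℝ} (hu : |u| ≤ π) :
    |sinc u| ≤ exp (-(2 * π ^ 2)⁻¹ * u ^ 2) := by
  have hcos : cos (u / 2) ≤ 1 - 2 / π ^ 2 * (u / 2) ^ 2 :=
    cos_le_one_sub_mul_cos_sq (by rw [abs_div, abs_two]; linarith [abs_nonneg u, pi_pos])
  calc |sinc u| = sinc u := abs_of_nonneg (sinc_nonneg hu)
    _ ≤ -(2 * π ^ 2)⁻¹ * u ^ 2 + 1 := by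
      have hsinc := sinc_le_cos_half hu
      have hsq : 2 / π ^ 2 * (u / 2) ^ 2 = (2 * π ^ 2)⁻¹ * u ^ 2 := by field_simp
      linarith
    _ ≤ exp (-(2 * π ^ 2)⁻¹ * u ^ 2) := add_one_le_exp _

lemma abs_sinc_sub_one_sub_sq_le {u : ℝ} (hu : |u| ≤ 1) :
    |sinc u - (1 - u ^ 2 / 6)| ≤ |u| ^ 4 / 100 := by
  rcases eq_or_ne u 0 with rfl | h0
  · simp
  have hpos : 0 < |u| := abs_pos.mpr h0
  have hquot : sinc u - (1 - u ^ 2 / 6) = (sin u - (u - u ^ 3 / 6)) / u := by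
    rw [sinc_of_ne_zero h0]; field_simp
  rw [hquot, abs_div, div_le_iff₀ hpos]
  calc |sin u - (u - u ^ 3 / 6)| ≤ |u| ^ 5 / 100 := sin_bound hu
    _ = |u| ^ 4 / 100 * |u| := by ring

lemma abs_sinc_le_inv {t : ℝ} (ht : 0 < t) : |sinc t| ≤ t⁻¹ := by
  rw [sinc_of_ne_zero ht.ne', abs_div, abs_of_pos ht, div_eq_mul_inv]
  exact mul_le_of_le_one_left (inv_nonneg.2 ht.le) (abs_sin_le_one t)

lemma tendsto_sinc_div_sqrt_pow (s : ℝ) :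
    Tendsto (fun n : ℕ ↦ sinc (s / √n) ^ n) atTop (nhds (exp (-(1 / 6) * s ^ 2))) := by
  have hu : Tendsto (fun n : ℕ ↦ s / √n) atTop (nhds 0) :=
    tendsto_const_nhds.div_atTop (tendsto_sqrt_atTop.comp tendsto_natCast_atTop_atTop)
  have hsq : ∀ n : ℕ, (s / √n) ^ 2 = s ^ 2 / n := fun n ↦ by
    rw [div_pow, sq_sqrt n.cast_nonneg]
  have herr : Tendsto (fun n : ℕ ↦ n * (sinc (s / √n) - (1 - (s / √n) ^ 2 / 6))) atTop
      (nhds 0) := by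
    refine squeeze_zero_norm' ?_ (tendsto_const_div_atTop_nhds_zero_nat (s ^ 4 / 100))
    filter_upwards [hu.eventually (Metric.closedBall_mem_nhds 0 one_pos)] with n hn
    rw [dist_zero_right, norm_eq_abs] at hn
    calc ‖(n : ℝ) * (sinc (s / √n) - (1 - (s / √n) ^ 2 / 6))‖
        ≤ n * (|s / √n| ^ 4 / 100) := by
          rw [norm_mul, RCLike.norm_natCast]
          gcongr
          exact abs_sinc_sub_one_sub_sq_le hn
      _ = n * (((s / √n) ^ 2) ^ 2 / 100) := by
          rw [pow_abs, abs_of_nonneg (by positivity)]; ring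
      _ = s ^ 4 / 100 / n := by
          rw [hsq]; field_simp
  have hmain : Tendsto (fun n : ℕ ↦ n * (sinc (s / √n) - 1)) atTop
      (nhds (-(1 / 6) * s ^ 2)) := by
    refine (zero_add (-(1 / 6) * s ^ 2) ▸ herr.add_const _).congr' ?_
    filter_upwards [eventually_gt_atTop 0] with n hn
    rw [hsq]
    field_simp
    ring
  simpa using tendsto_one_add_pow_exp_of_tendsto hmain

lemma abs_sinc_div_sqrt_pow_le {n : ℕ} {s : ℝ} (hs : s ∈ Ioc 0 (π * √n)) :
    |sinc (s / √n) ^ n| ≤ exp (-(2 * π ^ 2)⁻¹ * s ^ 2) := by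
  have hn : 0 < √(n : ℝ) := pos_of_mul_pos_right (hs.1.trans_le hs.2) pi_pos.le
  have hu : |s / √n| ≤ π := by
    rw [abs_of_pos (div_pos hs.1 hn), div_le_iff₀ hn]; exact hs.2
  calc |sinc (s / √n) ^ n| ≤ exp (-(2 * π ^ 2)⁻¹ * (s / √n) ^ 2) ^ n := by
        rw [abs_pow]; gcongr; exact abs_sinc_le_exp_neg_sq hu
    _ = exp (-(2 * π ^ 2)⁻¹ * s ^ 2) := by
        rw [← exp_nat_mul, div_pow, sq_sqrt n.cast_nonneg]
        field_simp [(sqrt_pos.1 hn).ne']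

section Tail

variable {a : ℝ} {n : ℕ}

lemma norm_sinc_pow_le (ha : 0 < a) (hn : 2 ≤ n) {t : ℝ} (ht : a ≤ t) :
    ‖sinc t ^ n‖ ≤ a⁻¹ ^ (n - 2) * t ^ (-2 : ℝ) := by
  have ht0 : 0 < t := ha.trans_le ht
  have hsplit : t⁻¹ ^ n = t⁻¹ ^ (n - 2) * t ^ (-2 : ℝ) := by
    rw [rpow_neg ht0.le, rpow_two, ← inv_pow, ← pow_add, Nat.sub_add_cancel hn]
  calc ‖sinc t ^ n‖ = |sinc t| ^ n := by rw [norm_pow, norm_eq_abs]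
    _ ≤ t⁻¹ ^ n := by gcongr; exact abs_sinc_le_inv ht0
    _ ≤ a⁻¹ ^ (n - 2) * t ^ (-2 : ℝ) := by
      rw [hsplit]; gcongr

lemma integrableOn_Ioi_sinc_pow (ha : 0 < a) (hn : 2 ≤ n) :
    IntegrableOn (fun t ↦ sinc t ^ n) (Ioi a) := by
  refine ((integrableOn_Ioi_rpow_of_lt (a := -2) (by norm_num) ha).const_mul (a⁻¹ ^ (n - 2))).mono'
    (continuous_sinc.pow n).aestronglyMeasurable ?_
  filter_upwards [ae_restrict_mem measurableSet_Ioi] with t ht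
  exact norm_sinc_pow_le ha hn (le_of_lt ht)

lemma norm_integral_Ioi_sinc_pow_le (ha : 0 < a) (hn : 2 ≤ n) :
    ‖∫ t in Ioi a, sinc t ^ n‖ ≤ a⁻¹ ^ (n - 1) := by
  have hg := (integrableOn_Ioi_rpow_of_lt (a := -2) (by norm_num) ha).const_mul (a⁻¹ ^ (n - 2))
  refine (norm_integral_le_of_norm_le hg ?_).trans_eq ?_
  · filter_upwards [ae_restrict_mem measurableSet_Ioi] with t ht
    exact norm_sinc_pow_le ha hn (le_of_lt ht)
  · rw [integral_const_mul, integral_Ioi_rpow_of_lt (by norm_num) ha]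
    norm_num
    rw [rpow_neg_one, ← mul_inv, ← pow_succ, show n - 2 + 1 = n - 1 by omega]

lemma tendsto_sqrt_mul_integral_Ioi_sinc_pow (ha : 1 < a) :
    Tendsto (fun n : ℕ ↦ √n * ∫ t in Ioi a, sinc t ^ n) atTop (nhds 0) := by
  have ha0 : 0 < a := one_pos.trans ha
  have hgeom : Tendsto (fun n : ℕ ↦ a * (n * a⁻¹ ^ n)) atTop (nhds 0) := by
    simpa using (tendsto_self_mul_const_pow_of_lt_one (inv_nonneg.2 ha0.le)
      (inv_lt_one_of_one_lt₀ ha)).const_mul a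
  refine squeeze_zero_norm' ?_ hgeom
  filter_upwards [eventually_ge_atTop 2] with n hn
  calc ‖√n * ∫ t in Ioi a, sinc t ^ n‖ ≤ n * a⁻¹ ^ (n - 1) := by
        rw [norm_mul, norm_of_nonneg (sqrt_nonneg _)]
        gcongr
        · exact sqrt_le_self_iff.2 (.inr (by exact_mod_cast (by omega : 1 ≤ n)))
        · exact norm_integral_Ioi_sinc_pow_le ha0 hn
    _ = a * (n * a⁻¹ ^ n) := by
        rw [← Nat.sub_add_cancel (by omega : 1 ≤ n), pow_succ, Nat.add_sub_cancel]
        field_simp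

end Tail

end Real

lemma mul_intervalIntegral_eq_integral_indicator_comp_div {f : ℝ → ℝ} {b c : ℝ} (hb : 0 ≤ b)
    (hc : 0 < c) :
    c * ∫ t in (0)..b, f t = ∫ s, (Ioc 0 (b * c)).indicator (fun s ↦ f (s / c)) s := by
  rw [integral_indicator measurableSet_Ioc, ← intervalIntegral.integral_of_le (by positivity),
    intervalIntegral.integral_comp_div f hc.ne', zero_div, mul_div_cancel_right₀ _ hc.ne',
    smul_eq_mul]

lemma tendsto_sqrt_mul_intervalIntegral_sinc_pow :
    Tendsto (fun n : ℕ ↦ √n * ∫ t in (0)..π, sinc t ^ n) atTop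
      (nhds (∫ s in Ioi 0, exp (-(1 / 6) * s ^ 2))) := by
  set F : ℕ → ℝ → ℝ := fun n ↦ (Ioc 0 (π * √n)).indicator fun s ↦ sinc (s / √n) ^ n
  have hbound (n : ℕ) (s : ℝ) : ‖F n s‖ ≤ exp (-(2 * π ^ 2)⁻¹ * s ^ 2) := by
    dsimp only [F]
    by_cases hs : s ∈ Ioc 0 (π * √n)
    · rw [indicator_of_mem hs, norm_eq_abs]; exact abs_sinc_div_sqrt_pow_le hs
    · rw [indicator_of_notMem hs, norm_zero]; exact (exp_pos _).le
  have hlim (s : ℝ) : Tendsto (fun n ↦ F n s) atTop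
      (nhds ((Ioi 0).indicator (fun s ↦ exp (-(1 / 6) * s ^ 2)) s)) := by
    rcases le_or_gt s 0 with hs | hs
    · simp [F, indicator_of_notMem, not_lt.2 hs]
    · rw [indicator_of_mem (mem_Ioi.2 hs)]
      refine (tendsto_sinc_div_sqrt_pow s).congr' ?_
      filter_upwards [(tendsto_sqrt_atTop.comp tendsto_natCast_atTop_atTop).eventually_ge_atTop
        (s / π)] with n hn
      exact (indicator_of_mem (show s ∈ Ioc 0 (π * √n) from ⟨hs, (div_le_iff₀' pi_pos).1 hn⟩)
        (fun s ↦ sinc (s / √n) ^ n)).symm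
  rw [← integral_indicator measurableSet_Ioi]
  refine (tendsto_integral_of_dominated_convergence _ (fun n ↦ ?_)
    (integrable_exp_neg_mul_sq (by positivity)) (fun n ↦ .of_forall (hbound n))
    (.of_forall hlim)).congr' ?_
  · exact ((continuous_sinc.comp (continuous_id.div_const _)).pow n).aestronglyMeasurable.indicator
      measurableSet_Ioc
  · filter_upwards [eventually_gt_atTop 0] with n hn
    exact (mul_intervalIntegral_eq_integral_indicator_comp_div (f := fun t ↦ sinc t ^ n) pi_pos.le
      (sqrt_pos.2 (Nat.cast_pos.2 hn))).symm

/-- `I n → √(6/π)` as `n → ∞`; hence the upper bound `√(6/π)` is best possible. -/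
theorem I_tendsto_sqrt_six_div_pi :
    Tendsto I atTop (nhds (Real.sqrt (6 / Real.pi))) := by
  have hsplit : ∀ n : ℕ, 2 ≤ n →
      I n = 2 / π * ((√n * ∫ t in (0)..π, sinc t ^ n) + √n * ∫ t in Ioi π, sinc t ^ n) := by
    intro n hn
    have hsinc : ∫ t in Ioi 0, (sin t / t) ^ n = ∫ t in Ioi 0, sinc t ^ n :=
      setIntegral_congr_fun measurableSet_Ioi fun t ht ↦ by rw [sinc_of_ne_zero (ne_of_gt ht)]
    rw [I, hsinc, ← intervalIntegral.integral_interval_add_Ioi'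
      (f := fun t ↦ sinc t ^ n) ((continuous_sinc.pow n).intervalIntegrable 0 π)
      (integrableOn_Ioi_sinc_pow pi_pos hn)]
    ring
  have hlim := (tendsto_sqrt_mul_intervalIntegral_sinc_pow.add
    (tendsto_sqrt_mul_integral_Ioi_sinc_pow (by linarith [pi_gt_three]))).const_mul (2 / π)
  have hval : 2 / π * ((∫ s in Ioi 0, exp (-(1 / 6) * s ^ 2)) + 0) = √(6 / π) := by
    rw [add_zero, integral_gaussian_Ioi, show π / (1 / 6) = 6 / π * π ^ 2 by field_simp,
      sqrt_mul (by positivity), sqrt_sq pi_pos.le]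
    field_simp
  rw [hval] at hlim
  exact hlim.congr' (eventually_ge_atTop 2 |>.mono fun n hn ↦ (hsplit n hn).symm)
end

section
/- For every integer n ≥ 3, (2√n/π) ∫₁^∞ e^{−n x²/6} (1 + x²/20 + 13x⁴/30240) dx < 5 e^{−n/6}. -/
/-!
On `(1, ∞)` the polynomial factor is at most `2 (1 + x²/24)² ≤ 2 e^{x²/12} ≤ 2x e^{x²/12}`, so the
integrand is dominated by `2x e^{-a x²}` with `a = (2n - 1)/12`, whose integral over `(1, ∞)` is
`e^{-a}/a` in closed form. Since `e^{-a} = e^{1/12} e^{-n/6}`, what remains is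
`24 √n e^{1/12} < 5π (2n - 1)`, which follows from `√n ≤ (n + 1)/2`, `e^{1/12} < 12/11` and `π > 3`.
-/

open MeasureTheory Real Filter Set Topology

theorem integral_Ioi_mul_exp_neg_mul_sq {a : ℝ} (ha : 0 < a) (c : ℝ) :
    ∫ x in Ioi c, x * exp (-a * x ^ 2) = exp (-a * c ^ 2) / (2 * a) := by
  have hderiv (x : ℝ) :
      HasDerivAt (fun x ↦ -(exp (-a * x ^ 2) / (2 * a))) (x * exp (-a * x ^ 2)) x := by
    refine (((hasDerivAt_pow 2 x).const_mul (-a)).exp.div_const (2 * a)).neg.congr_deriv ?_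
    field_simp
    ring
  have hlim : Tendsto (fun x ↦ -(exp (-a * x ^ 2) / (2 * a))) atTop (𝓝 0) := by
    have hsq : Tendsto (fun x : ℝ ↦ -a * x ^ 2) atTop atBot :=
      (tendsto_pow_atTop two_ne_zero).const_mul_atTop_of_neg (neg_neg_of_pos ha)
    simpa using ((tendsto_exp_atBot.comp hsq).div_const (2 * a)).neg
  rw [integral_Ioi_of_hasDerivAt_of_tendsto' (fun x _ ↦ hderiv x)
    (integrable_mul_exp_neg_mul_sq ha).integrableOn hlim]
  ring

theorem one_add_sq_div_add_pow_four_div_le_two_mul_exp (x : ℝ) :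
    1 + x ^ 2 / 20 + 13 * x ^ 4 / 30240 ≤ 2 * exp (x ^ 2 / 12) := by
  have hexp : (1 + x ^ 2 / 24) ^ 2 ≤ exp (x ^ 2 / 12) := by
    calc (1 + x ^ 2 / 24) ^ 2 ≤ exp (x ^ 2 / 24) ^ 2 := by
          gcongr
          linarith [add_one_le_exp (x ^ 2 / 24)]
      _ = exp (x ^ 2 / 12) := by rw [← exp_nat_mul]; ring_nf
  calc 1 + x ^ 2 / 20 + 13 * x ^ 4 / 30240 ≤ 2 * (1 + x ^ 2 / 24) ^ 2 := by
        nlinarith [sq_nonneg x, sq_nonneg (x ^ 2)]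
    _ ≤ 2 * exp (x ^ 2 / 12) := by gcongr

theorem gaussian_tail_integrand_le {N x : ℝ} (hx : 1 ≤ x) :
    exp (-N * x ^ 2 / 6) * (1 + x ^ 2 / 20 + 13 * x ^ 4 / 30240)
      ≤ 2 * (x * exp (-((2 * N - 1) / 12) * x ^ 2)) := by
  have hsplit : exp (-((2 * N - 1) / 12) * x ^ 2) = exp (-N * x ^ 2 / 6) * exp (x ^ 2 / 12) := by
    rw [← exp_add]; ring_nf
  calc exp (-N * x ^ 2 / 6) * (1 + x ^ 2 / 20 + 13 * x ^ 4 / 30240)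
      ≤ exp (-N * x ^ 2 / 6) * (2 * exp (x ^ 2 / 12)) := by
        gcongr; exact one_add_sq_div_add_pow_four_div_le_two_mul_exp x
    _ = 2 * (1 * exp (-((2 * N - 1) / 12) * x ^ 2)) := by rw [hsplit]; ring
    _ ≤ 2 * (x * exp (-((2 * N - 1) / 12) * x ^ 2)) := by gcongr

theorem setIntegral_gaussian_tail_integrand_le {N : ℝ} (hN : 1 / 2 < N) :
    ∫ x in Ioi (1 : ℝ), exp (-N * x ^ 2 / 6) * (1 + x ^ 2 / 20 + 13 * x ^ 4 / 30240)
      ≤ 12 * exp (-((2 * N - 1) / 12)) / (2 * N - 1) := by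
  have ha : 0 < (2 * N - 1) / 12 := by linarith
  have hbound := (integrable_mul_exp_neg_mul_sq ha).integrableOn (s := Ioi 1) |>.const_mul 2
  have hle : ∀ x ∈ Ioi (1 : ℝ), exp (-N * x ^ 2 / 6) * (1 + x ^ 2 / 20 + 13 * x ^ 4 / 30240)
      ≤ 2 * (x * exp (-((2 * N - 1) / 12) * x ^ 2)) :=
    fun x hx ↦ gaussian_tail_integrand_le (le_of_lt hx)
  have hint : IntegrableOn
      (fun x ↦ exp (-N * x ^ 2 / 6) * (1 + x ^ 2 / 20 + 13 * x ^ 4 / 30240)) (Ioi 1) := by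
    refine hbound.mono' (by fun_prop) ?_
    filter_upwards [ae_restrict_mem measurableSet_Ioi] with x hx
    rw [norm_of_nonneg (by positivity)]
    exact hle x hx
  calc _ ≤ ∫ x in Ioi (1 : ℝ), 2 * (x * exp (-((2 * N - 1) / 12) * x ^ 2)) :=
        setIntegral_mono_on hint hbound measurableSet_Ioi hle
    _ = 12 * exp (-((2 * N - 1) / 12)) / (2 * N - 1) := by
        rw [integral_const_mul, integral_Ioi_mul_exp_neg_mul_sq ha]
        field_simp

theorem mul_sqrt_mul_exp_one_div_twelve_lt {N : ℝ} (hN : 3 ≤ N) :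
    24 * sqrt N * exp (1 / 12) < 5 * π * (2 * N - 1) := by
  have hexp : exp (1 / 12) < 12 / 11 := by
    have := exp_bound_div_one_sub_of_interval' (x := 1 / 12) (by norm_num) (by norm_num)
    norm_num at this ⊢; exact this
  have hsqrt : sqrt N ≤ (N + 1) / 2 := by
    nlinarith [sq_sqrt (by linarith : (0 : ℝ) ≤ N), sq_nonneg (sqrt N - 1)]
  have hpi := pi_gt_three
  calc 24 * sqrt N * exp (1 / 12) ≤ 24 * ((N + 1) / 2) * exp (1 / 12) := by gcongr
    _ < 24 * ((N + 1) / 2) * (12 / 11) := by gcongr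
    _ < 5 * 3 * (2 * N - 1) := by linarith
    _ < 5 * π * (2 * N - 1) := by gcongr; linarith

/-- For `n ≥ 3`, `(2√n/π) ∫₁^∞ e^{-n x²/6}(1 + x²/20 + 13x⁴/30240) dx < 5 e^{-n/6}`. -/
theorem gaussian_tail_lt (n : ℕ) (hn : 3 ≤ n) :
    2 * Real.sqrt n / Real.pi *
        ∫ x in Set.Ioi (1 : ℝ),
          Real.exp (-(n : ℝ) * x ^ 2 / 6) * (1 + x ^ 2 / 20 + 13 * x ^ 4 / 30240)
      < 5 * Real.exp (-(n : ℝ) / 6) := by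
  have hN : (3 : ℝ) ≤ n := by exact_mod_cast hn
  have hden : 0 < π * (2 * n - 1) := mul_pos pi_pos (by linarith)
  have hexp : exp (-((2 * n - 1) / 12)) = exp (1 / 12) * exp (-n / 6) := by
    rw [← exp_add]; ring_nf
  calc 2 * sqrt n / π * ∫ x in Ioi (1 : ℝ),
          exp (-(n : ℝ) * x ^ 2 / 6) * (1 + x ^ 2 / 20 + 13 * x ^ 4 / 30240)
      ≤ 2 * sqrt n / π * (12 * exp (-((2 * n - 1) / 12)) / (2 * n - 1)) := by
        gcongr; exact setIntegral_gaussian_tail_integrand_le (by linarith)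
    _ = 24 * sqrt n * exp (1 / 12) / (π * (2 * n - 1)) * exp (-n / 6) := by
        rw [hexp]; field_simp; ring
    _ < 5 * exp (-n / 6) := by
        gcongr
        rw [div_lt_iff₀ hden, ← mul_assoc]
        exact mul_sqrt_mul_exp_one_div_twelve_lt hN
end

section
/- The function x(t) = √(−6 log((sin t)/t)) is strictly increasing on [0, 1.1], satisfies x(t) ≤ 1.123841 for all t ∈ [0, 1.1], and maps [0, 1.1] bijectively onto [0, x(1.1)]. -/
/-!
Since `(sin t)/t` is the slope of the secant of the strictly concave function `sin` through the
origin, it decreases strictly on `[0, π]`, so `x = √(-6 log sinc)` increases strictly and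
continuously on `[0, π)`; the bijection then follows from the intermediate value theorem.
The numerical bound reduces to `x(1.1) ≤ 1.123841`, i.e. `1.1 ≤ exp(1.123841² / 6) · sin 1.1`,
which follows from the Taylor lower bounds of degree 4 for `exp` and of degree 7 for `sin`.
-/

open Real Set

/-- `x(t) = √(-6 log((sin t)/t))`, with `(sin t)/t` taken to be `1` at `t = 0`. -/
noncomputable def xfun (t : ℝ) : ℝ :=
  Real.sqrt (-6 * Real.log (if t = 0 then 1 else Real.sin t / t))

theorem ContinuousOn.bijOn_Icc_of_strictMonoOn {α δ : Type*}
    [ConditionallyCompleteLinearOrder α] [TopologicalSpace α] [OrderTopology α] [DenselyOrdered α]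
    [LinearOrder δ] [TopologicalSpace δ] [OrderClosedTopology δ] {f : α → δ} {a b : α}
    (hab : a ≤ b) (hf : ContinuousOn f (Icc a b))
    (hmono : StrictMonoOn f (Icc a b)) : BijOn f (Icc a b) (Icc (f a) (f b)) :=
  hf.image_Icc_of_monotoneOn hab hmono.monotoneOn ▸ hmono.injOn.bijOn_image

namespace Real

/-- The Lagrange remainder `cos ξ · x⁹ / 9!` of the degree-8 Taylor polynomial is nonnegative. -/
theorem taylor_seven_le_sin {x : ℝ} (hx0 : 0 ≤ x) (hx : x ≤ π / 2) :
    x - x ^ 3 / 6 + x ^ 5 / 120 - x ^ 7 / 5040 ≤ sin x := by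
  rcases hx0.eq_or_lt with rfl | hpos
  · simp
  obtain ⟨ξ, hξ, hrem⟩ :=
    taylor_mean_remainder_lagrange_iteratedDeriv (n := 8) hpos.ne contDiff_sin.contDiffOn
  have htaylor :
      taylorWithinEval sin 8 (uIcc 0 x) 0 x = x - x ^ 3 / 6 + x ^ 5 / 120 - x ^ 7 / 5040 := by
    have hu : UniqueDiffOn ℝ (uIcc 0 x) := uniqueDiffOn_uIcc hpos.ne
    simp only [taylor_within_apply, Finset.sum_range_succ, Finset.sum_range_zero,
      iteratedDerivWithin_eq_iteratedDeriv hu contDiff_sin.contDiffAt left_mem_uIcc,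
      iteratedDeriv_succ, iteratedDeriv_zero, deriv_sin, deriv_cos', deriv.fun_neg', sin_zero,
      cos_zero, smul_eq_mul]
    norm_num [Nat.factorial]
    ring
  have hξ' : ξ ∈ Ioo 0 x := by simpa [uIoo_of_le hx0] using hξ
  have hcos : 0 ≤ cos ξ :=
    cos_nonneg_of_mem_Icc ⟨by linarith [pi_pos, hξ'.1], by linarith [hξ'.2]⟩
  have hremainder :
      0 ≤ iteratedDeriv (8 + 1) sin ξ * (x - 0) ^ (8 + 1) / (8 + 1).factorial := by
    rw [show 8 + 1 = 2 * 4 + 1 from rfl, iteratedDeriv_odd_sin]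
    simp only [Pi.mul_apply, Pi.pow_apply, Pi.neg_apply, Pi.one_apply, sub_zero]
    positivity
  linarith

theorem sinc_pos {x : ℝ} (hx0 : 0 ≤ x) (hx : x < π) : 0 < sinc x := by
  rcases hx0.eq_or_lt with rfl | hpos
  · simp
  · rw [sinc_of_ne_zero hpos.ne']
    exact div_pos (sin_pos_of_pos_of_lt_pi hpos hx) hpos

theorem strictAntiOn_sinc : StrictAntiOn sinc (Icc 0 π) := by
  intro x hx y hy hxy
  rcases hx.1.eq_or_lt with rfl | hx0
  · rw [sinc_zero, sinc_of_ne_zero hxy.ne', div_lt_one hxy]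
    exact sin_lt hxy
  · have hslope := strictConcaveOn_sin_Icc.secant_strict_mono ⟨le_rfl, pi_pos.le⟩ hx hy
      hx0.ne' (hx0.trans hxy).ne' hxy
    simpa [sinc_of_ne_zero hx0.ne', sinc_of_ne_zero (hx0.trans hxy).ne'] using hslope

end Real

theorem xfun_eq_sqrt_log_sinc (t : ℝ) : xfun t = √(-6 * log (sinc t)) := rfl

theorem xfun_zero : xfun 0 = 0 := by simp [xfun_eq_sqrt_log_sinc]

theorem strictMonoOn_xfun : StrictMonoOn xfun (Ico 0 π) := by
  intro s hs t ht hst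
  simp only [xfun_eq_sqrt_log_sinc]
  have hlog_nonpos : log (sinc s) ≤ 0 := log_nonpos (sinc_pos hs.1 hs.2).le (sinc_le_one s)
  have hsinc_lt : sinc t < sinc s :=
    strictAntiOn_sinc (Ico_subset_Icc_self hs) (Ico_subset_Icc_self ht) hst
  have hlog_lt : log (sinc t) < log (sinc s) := log_lt_log (sinc_pos ht.1 ht.2) hsinc_lt
  exact sqrt_lt_sqrt (by linarith) (by linarith)

theorem continuousOn_xfun : ContinuousOn xfun (Ico 0 π) := by
  have hlog : ContinuousOn (fun t ↦ log (sinc t)) (Ico 0 π) :=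
    continuous_sinc.continuousOn.log fun t ht ↦ (sinc_pos ht.1 ht.2).ne'
  exact (continuousOn_const.mul hlog).sqrt

theorem exp_neg_le_sinc_one_point_one : exp (-(1.123841 ^ 2 / 6)) ≤ sinc 1.1 := by
  set c : ℝ := 1.123841 ^ 2 / 6 with hc
  have hexp : 1 + c + c ^ 2 / 2 + c ^ 3 / 6 + c ^ 4 / 24 ≤ exp c := by
    have h := sum_le_exp_of_nonneg (by positivity : (0 : ℝ) ≤ c) 5
    norm_num [Finset.sum_range_succ, Nat.factorial] at h
    linarith
  have hsin : (1.1 : ℝ) - 1.1 ^ 3 / 6 + 1.1 ^ 5 / 120 - 1.1 ^ 7 / 5040 ≤ sin 1.1 :=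
    taylor_seven_le_sin (by norm_num) (by linarith [pi_gt_three])
  rw [sinc_of_ne_zero (by norm_num), le_div_iff₀ (by norm_num), exp_neg,
    inv_mul_le_iff₀ (exp_pos c)]
  calc (1.1 : ℝ)
      ≤ (1 + c + c ^ 2 / 2 + c ^ 3 / 6 + c ^ 4 / 24) *
          (1.1 - 1.1 ^ 3 / 6 + 1.1 ^ 5 / 120 - 1.1 ^ 7 / 5040) := by norm_num [hc]
    _ ≤ exp c * sin 1.1 := mul_le_mul hexp hsin (by norm_num) (exp_pos c).le

theorem xfun_one_point_one_le : xfun 1.1 ≤ 1.123841 := by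
  rw [xfun_eq_sqrt_log_sinc, sqrt_le_left (by norm_num)]
  have hlog := (le_log_iff_exp_le (sinc_pos (by norm_num) (by linarith [pi_gt_three]))).2
    exp_neg_le_sinc_one_point_one
  linarith

/-- `x(t)` is strictly increasing on `[0, 1.1]`, bounded above by `1.123841` there,
and maps `[0, 1.1]` bijectively onto `[0, x(1.1)]`. -/
theorem xfun_strictMono_bound_bijOn :
    StrictMonoOn xfun (Icc (0 : ℝ) 1.1) ∧
    (∀ t ∈ Icc (0 : ℝ) 1.1, xfun t ≤ 1.123841) ∧
    BijOn xfun (Icc (0 : ℝ) 1.1) (Icc 0 (xfun 1.1)) := by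
  have hsub : Icc (0 : ℝ) 1.1 ⊆ Ico 0 π := Icc_subset_Ico_right (by linarith [pi_gt_three])
  have hmono : StrictMonoOn xfun (Icc (0 : ℝ) 1.1) := strictMonoOn_xfun.mono hsub
  have hbij := (continuousOn_xfun.mono hsub).bijOn_Icc_of_strictMonoOn (by norm_num) hmono
  rw [xfun_zero] at hbij
  refine ⟨hmono, fun t ht ↦ ?_, hbij⟩
  exact (hmono.monotoneOn ht ⟨by norm_num, le_rfl⟩ ht.2).trans xfun_one_point_one_le
end

section
/- Let f(t) = (sin t)/t for t > 0 and f(0) = 1. Then for all integers m ≥ 0 and N with 2N ≥ m, and all real t ≥ 0, | (1/m!) f⁽ᵐ⁾(t) − (1/m!) ∑_{⌈m/2⌉ ≤ k ≤ N} (−1)^k t^{2k−m} / ((2k−m)! (2k+1)) | ≤ (1/m!) e^t t^{2N+2−m} / (2N+2−m)!. -/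
/-!
The `j`-th Taylor coefficient of `sinc` is `±1/(j+1)!` or `0`, so it is at most `1/j!` in absolute
value, and this bound survives termwise differentiation: `(j+1) |a (j+1)| ≤ 1/j!`. So every
derivative of `sinc` is an entire power series with coefficients bounded by `1/j!`, and its
remainder after `J` terms is at most `∑_{i ≥ 0} |t|^(i+J)/(i+J)! ≤ (|t|^J/J!) e^|t|`, because
`J! i! ≤ (i+J)!`. The sum in the statement is the partial sum of the series of `sinc⁽ᵐ⁾` up to
degree `2N+1-m`, reindexed by `j = 2k - m`.
-/

open Real Finset

/-- `f(t) = (sin t)/t` for `t ≠ 0`, with `f(0) = 1`. -/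
noncomputable def sinc' (t : ℝ) : ℝ := if t = 0 then 1 else Real.sin t / t

open Nat

section PowerSeries

variable {a : ℕ → ℝ}

theorem abs_descFactorial_mul_le_inv_factorial (ha : ∀ j, |a j| ≤ (j ! : ℝ)⁻¹) (m j : ℕ) :
    |((j + m).descFactorial m : ℝ) * a (j + m)| ≤ (j ! : ℝ)⁻¹ := by
  have hfac : (j ! : ℝ) * (j + m).descFactorial m = (j + m)! := by
    exact_mod_cast Nat.add_sub_cancel j m ▸ Nat.factorial_mul_descFactorial (Nat.le_add_left m j)
  rw [abs_mul, Nat.abs_cast]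
  calc ((j + m).descFactorial m : ℝ) * |a (j + m)|
      ≤ (j + m).descFactorial m * ((j + m)! : ℝ)⁻¹ := by gcongr; exact ha _
    _ = (j ! : ℝ)⁻¹ := by rw [← hfac]; field_simp

theorem hasSum_deriv_of_abs_le_inv_factorial {f : ℝ → ℝ} (ha : ∀ j, |a j| ≤ (j ! : ℝ)⁻¹)
    (hf : ∀ x, HasSum (fun j => a j * x ^ j) (f x)) (x : ℝ) :
    HasSum (fun j : ℕ => ((j : ℝ) + 1) * a (j + 1) * x ^ j) (deriv f x) := by
  set R := |x| + 1
  have hx : x ∈ Set.Ioo (-R) R := ⟨by linarith [neg_abs_le x], by linarith [le_abs_self x]⟩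
  -- the termwise derivatives on `(-R, R)` are dominated by the derivative series of `exp R`
  have hu : Summable fun j : ℕ => (j : ℝ) * R ^ (j - 1) / j ! := by
    rw [← summable_nat_add_iff 1]
    refine (Real.summable_pow_div_factorial R).congr fun j => ?_
    rw [Nat.factorial_succ]
    push_cast
    field_simp
  have hbound : ∀ j, ∀ y ∈ Set.Ioo (-R) R,
      ‖a j * ((j : ℝ) * y ^ (j - 1))‖ ≤ (j : ℝ) * R ^ (j - 1) / j ! := by
    intro j y hy
    have hyR : |y| ≤ R := abs_le.mpr ⟨hy.1.le, hy.2.le⟩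
    rw [norm_mul, norm_mul, norm_pow, Real.norm_natCast, Real.norm_eq_abs, Real.norm_eq_abs,
      div_eq_inv_mul]
    gcongr
    exact ha j
  have hderiv : HasDerivAt f (∑' j, a j * ((j : ℝ) * x ^ (j - 1))) x := by
    have hf_eq : f = fun z => ∑' j, a j * z ^ j := funext fun z => (hf z).tsum_eq.symm
    rw [hf_eq]
    exact hasDerivAt_tsum_of_isPreconnected hu isOpen_Ioo isPreconnected_Ioo
      (fun j y _ => (hasDerivAt_pow j y).const_mul (a j)) hbound hx (hf x).summable hx
  rw [hderiv.deriv]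
  have hsum := (hu.of_norm_bounded fun j => hbound j x hx).hasSum
  rw [← hasSum_nat_add_iff' 1] at hsum
  simpa [mul_comm, mul_left_comm, mul_assoc] using hsum

theorem hasSum_iteratedDeriv_of_abs_le_inv_factorial {f : ℝ → ℝ}
    (ha : ∀ j, |a j| ≤ (j ! : ℝ)⁻¹) (hf : ∀ x, HasSum (fun j => a j * x ^ j) (f x)) (m : ℕ)
    (x : ℝ) :
    HasSum (fun j => ((j + m).descFactorial m : ℝ) * a (j + m) * x ^ j)
      (iteratedDeriv m f x) := by
  induction m generalizing x with
  | zero => simpa using hf x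
  | succ m ih =>
    rw [iteratedDeriv_succ]
    convert hasSum_deriv_of_abs_le_inv_factorial (abs_descFactorial_mul_le_inv_factorial ha m) ih x
      using 2 with j
    rw [show j + (m + 1) = j + 1 + m by ring, Nat.descFactorial_succ, Nat.add_sub_cancel]
    push_cast
    ring

theorem abs_sub_sum_range_le_of_abs_le_inv_factorial (ha : ∀ j, |a j| ≤ (j ! : ℝ)⁻¹) {x s : ℝ}
    (hs : HasSum (fun j => a j * x ^ j) s) (J : ℕ) :
    |s - ∑ j ∈ range J, a j * x ^ j| ≤ exp |x| * |x| ^ J / J ! := by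
  have htail := (hasSum_nat_add_iff' J).mpr hs
  have hexp : HasSum (fun j => |x| ^ J / J ! * (|x| ^ j / j !)) (|x| ^ J / J ! * exp |x|) := by
    rw [Real.exp_eq_exp_ℝ]
    exact (NormedSpace.expSeries_div_hasSum_exp |x|).mul_left _
  rw [← Real.norm_eq_abs, show exp |x| * |x| ^ J / J ! = |x| ^ J / J ! * exp |x| by ring]
  refine htail.norm_le_of_bounded hexp fun j => ?_
  have hfac : (J ! * j ! : ℝ) ≤ (j + J)! := by
    exact_mod_cast Nat.le_of_dvd (Nat.factorial_pos _)
      (add_comm J j ▸ Nat.factorial_mul_factorial_dvd_factorial_add J j)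
  calc ‖a (j + J) * x ^ (j + J)‖ ≤ |x| ^ (j + J) / (j + J)! := by
        rw [norm_mul, norm_pow, Real.norm_eq_abs, Real.norm_eq_abs, div_eq_inv_mul]
        gcongr
        exact ha _
    _ ≤ |x| ^ (j + J) / (J ! * j !) := by gcongr
    _ = |x| ^ J / J ! * (|x| ^ j / j !) := by ring

end PowerSeries

noncomputable def sincCoeff (j : ℕ) : ℝ := if Even j then (-1) ^ (j / 2) / (j + 1)! else 0

theorem abs_sincCoeff_le (j : ℕ) : |sincCoeff j| ≤ (j ! : ℝ)⁻¹ := by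
  unfold sincCoeff
  split_ifs
  · rw [abs_div, abs_pow, abs_neg, abs_one, one_pow, Nat.abs_cast, one_div]
    gcongr
    omega
  · rw [abs_zero]
    positivity

theorem sincCoeff_two_mul (k : ℕ) : sincCoeff (2 * k) = (-1) ^ k / (2 * k + 1)! := by
  simp [sincCoeff]

theorem Real.hasSum_sinc (x : ℝ) : HasSum (fun j => sincCoeff j * x ^ j) (sinc x) := by
  have hodd : ∀ j ∉ Set.range fun k : ℕ => 2 * k, sincCoeff j * x ^ j = 0 := fun j hj => by
    have : ¬Even j := fun ⟨k, hk⟩ => hj ⟨k, show 2 * k = j by omega⟩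
    rw [sincCoeff, if_neg this, zero_mul]
  rw [← (mul_right_injective₀ two_ne_zero).hasSum_iff hodd]
  simp only [Function.comp_def, sincCoeff_two_mul]
  rcases eq_or_ne x 0 with rfl | hx
  · simpa using hasSum_single (f := fun k : ℕ => (-1 : ℝ) ^ k / (2 * k + 1)! * 0 ^ (2 * k)) 0
      fun k hk => by simp [hk]
  · rw [sinc_of_ne_zero hx]
    have hterm : ∀ k : ℕ, (-1 : ℝ) ^ k / (2 * k + 1)! * x ^ (2 * k) =
        (-1) ^ k * x ^ (2 * k + 1) / (2 * k + 1)! / x := fun k => by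
      rw [pow_succ]
      field_simp
    simpa only [hterm] using (Real.hasSum_sin x).div_const x

theorem descFactorial_mul_sincCoeff_two_mul {m k : ℕ} (h : m ≤ 2 * k) :
    ((2 * k).descFactorial m : ℝ) * sincCoeff (2 * k) =
      (-1) ^ k / ((2 * k - m)! * (2 * k + 1)) := by
  have hfac : ((2 * k - m)! : ℝ) * (2 * k).descFactorial m = (2 * k)! := by
    exact_mod_cast Nat.factorial_mul_descFactorial h
  have hdesc : ((2 * k).descFactorial m : ℝ) ≠ 0 :=
    Nat.cast_ne_zero.mpr (Nat.descFactorial_eq_zero_iff_lt.not.mpr (by omega))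
  rw [sincCoeff_two_mul, Nat.factorial_succ]
  push_cast
  rw [← hfac]
  field_simp

theorem sum_Icc_eq_sum_range_sincCoeff (m N : ℕ) (t : ℝ) :
    ∑ k ∈ Icc ((m + 1) / 2) N, (-1 : ℝ) ^ k * t ^ (2 * k - m) / ((2 * k - m)! * (2 * k + 1)) =
      ∑ j ∈ range (2 * N + 2 - m), ((j + m).descFactorial m : ℝ) * sincCoeff (j + m) * t ^ j := by
  have hodd : ∀ j ∈ range (2 * N + 2 - m),
      ((j + m).descFactorial m : ℝ) * sincCoeff (j + m) * t ^ j ≠ 0 → Even (j + m) :=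
    fun j _ hj => by_contra fun h => hj (by simp [sincCoeff, h])
  rw [← sum_filter_of_ne hodd]
  refine sum_nbij' (fun k => 2 * k - m) (fun j => (j + m) / 2) ?_ ?_ ?_ ?_ fun k hk => ?_
  all_goals simp only [mem_Icc, mem_filter, mem_range, Nat.even_iff] at *
  · intro k hk; omega
  · intro j hj; omega
  · intro k hk; omega
  · intro j hj; omega
  · rw [Nat.sub_add_cancel (by omega), descFactorial_mul_sincCoeff_two_mul (by omega)]
    ring

theorem sinc_deriv_partial_sum_bound_general (m N : ℕ) (t : ℝ) (ht : 0 ≤ t) :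
    |(1 / (m.factorial : ℝ)) * iteratedDeriv m sinc' t -
        (1 / (m.factorial : ℝ)) * ∑ k ∈ Finset.Icc ((m + 1) / 2) N,
          (-1 : ℝ) ^ k * t ^ (2 * k - m) /
            (((2 * k - m).factorial : ℝ) * (2 * k + 1))| ≤
      (1 / (m.factorial : ℝ)) * Real.exp t * t ^ (2 * N + 2 - m) /
        ((2 * N + 2 - m).factorial : ℝ) := by
  have hsinc : sinc' = sinc := rfl
  have hsum := hasSum_iteratedDeriv_of_abs_le_inv_factorial abs_sincCoeff_le hasSum_sinc m t
  have hbound := abs_sub_sum_range_le_of_abs_le_inv_factorial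
    (abs_descFactorial_mul_le_inv_factorial abs_sincCoeff_le m) hsum (2 * N + 2 - m)
  rw [abs_of_nonneg ht, ← sum_Icc_eq_sum_range_sincCoeff] at hbound
  rw [hsinc, ← mul_sub, abs_mul, abs_of_nonneg (by positivity), mul_assoc, mul_div_assoc]
  exact mul_le_mul_of_nonneg_left hbound (by positivity)

/-- Remainder bound for the Taylor-series computation of the `m`-th derivative of
`sin t / t`: for `2N ≥ m` and `t ≥ 0`,
`|(1/m!) f⁽ᵐ⁾(t) - S_f(t;N,m)| ≤ (1/m!) eᵗ t^{2N+2-m}/(2N+2-m)!`. -/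
theorem sinc_deriv_partial_sum_bound (m N : ℕ) (hmN : m ≤ 2 * N) (t : ℝ) (ht : 0 ≤ t) :
    |(1 / (m.factorial : ℝ)) * iteratedDeriv m sinc' t -
        (1 / (m.factorial : ℝ)) * ∑ k ∈ Finset.Icc ((m + 1) / 2) N,
          (-1 : ℝ) ^ k * t ^ (2 * k - m) /
            (((2 * k - m).factorial : ℝ) * (2 * k + 1))| ≤
      (1 / (m.factorial : ℝ)) * Real.exp t * t ^ (2 * N + 2 - m) /
        ((2 * N + 2 - m).factorial : ℝ) :=
  sinc_deriv_partial_sum_bound_general m N t ht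
end

section
/- Let g(t) = log(1+t)/t for t ∈ (−1, 1), t ≠ 0, and g(0) = 1. For integers N ≥ m ≥ 0 and t ∈ (−1, 1), define E_g(t; N, m) = (−1)^m ∑_{k=N+1}^∞ (−1)^k C(k+m, m) t^k/(k+m+1), the tail of the series (1/m!) g⁽ᵐ⁾(t) = (−1)^m ∑_{k≥0} (−1)^k C(k+m, m) t^k/(k+m+1). Then |E_g(t; N, 0)| ≤ |t|^{N+1}/(1−|t|)^{N+2}, and for m ≥ 1, |E_g(t; N, m)| ≤ (2e/m)^m · m! · C(m+N+1, m) · |t|^{N+1}/(1−|t|)^{m+N+2}. -/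
/-!
Bounding each term of the tail in absolute value, dropping the denominator `k + m + 1 ≥ 1` and
using `C(k + r, m) ≤ C(r, m) C(k + r, r)` for `r = m + N + 1`, the tail is dominated by
`C(r, m) |t|^{N+1} ∑_k C(k + r, r) |t|^k = C(r, m) |t|^{N+1} / (1 - |t|)^{r+1}`.
The factor `(2e/m)^m m!` is at least `1`, because `m^m / m! ≤ e^m`.
-/

open Real Finset

/-- The tail `E_g(t; N, m)` of the series
`(1/m!) g⁽ᵐ⁾(t) = (-1)^m ∑_{k≥0} (-1)^k C(k+m,m) t^k/(k+m+1)`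
for `g(t) = log(1+t)/t`, starting at index `k = N+1`. -/
noncomputable def Eg (t : ℝ) (N m : ℕ) : ℝ :=
  (-1 : ℝ) ^ m * ∑' k : ℕ,
    (-1 : ℝ) ^ (N + 1 + k) * ((N + 1 + k + m).choose m : ℝ) *
      t ^ (N + 1 + k) / (N + 1 + k + m + 1 : ℝ)

theorem Nat.choose_le_choose_mul_choose {m r : ℕ} (hmr : m ≤ r) (k : ℕ) :
    (k + r).choose m ≤ r.choose m * (k + r).choose r := by
  have hpos : 0 < (k + r - m).choose (r - m) := Nat.choose_pos (by omega)
  calc (k + r).choose m ≤ (k + r).choose m * (k + r - m).choose (r - m) :=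
        Nat.le_mul_of_pos_right _ hpos
    _ = r.choose m * (k + r).choose r := by rw [← Nat.choose_mul hmr, mul_comm]

lemma abs_Eg_term_le (t : ℝ) (N m k : ℕ) :
    |(-1 : ℝ) ^ (N + 1 + k) * ((N + 1 + k + m).choose m : ℝ) * t ^ (N + 1 + k) /
        (N + 1 + k + m + 1 : ℝ)| ≤
      (m + N + 1).choose m * |t| ^ (N + 1) *
        ((k + (m + N + 1)).choose (m + N + 1) * |t| ^ k) := by
  have hden : (1 : ℝ) ≤ N + 1 + k + m + 1 := by linarith [(N + k + m).cast_nonneg (α := ℝ)]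
  have hchoose : ((N + 1 + k + m).choose m : ℝ) ≤
      (m + N + 1).choose m * (k + (m + N + 1)).choose (m + N + 1) := by
    rw [show N + 1 + k + m = k + (m + N + 1) by omega]
    exact_mod_cast Nat.choose_le_choose_mul_choose (by omega) k
  simp only [abs_div, abs_mul, abs_pow, abs_neg, abs_one, one_pow, one_mul, Nat.abs_cast]
  rw [abs_of_pos (a := (N + 1 + k + m + 1 : ℝ)) (by positivity)]
  calc ((N + 1 + k + m).choose m : ℝ) * |t| ^ (N + 1 + k) / (N + 1 + k + m + 1)
      ≤ ((N + 1 + k + m).choose m : ℝ) * |t| ^ (N + 1 + k) := div_le_self (by positivity) hden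
    _ ≤ (m + N + 1).choose m * (k + (m + N + 1)).choose (m + N + 1) * |t| ^ (N + 1 + k) := by
        gcongr
    _ = _ := by rw [pow_add]; ring

lemma abs_Eg_le (t : ℝ) (N m : ℕ) (ht : |t| < 1) :
    |Eg t N m| ≤ (m + N + 1).choose m * |t| ^ (N + 1) / (1 - |t|) ^ (m + N + 2) := by
  have hgeom := (hasSum_choose_mul_geometric_of_norm_lt_one (m + N + 1)
    (show ‖|t|‖ < 1 by rwa [norm_abs_eq_norm])).mul_left ((m + N + 1).choose m * |t| ^ (N + 1))
  rw [Eg, abs_mul, abs_pow, abs_neg, abs_one, one_pow, one_mul]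
  refine (tsum_of_norm_bounded hgeom fun k ↦
    (norm_eq_abs _).trans_le (abs_Eg_term_le t N m k)).trans_eq ?_
  ring

lemma one_le_exp_one_div_pow_mul_factorial (m : ℕ) : 1 ≤ (exp 1 / m) ^ m * m.factorial := by
  rcases m.eq_zero_or_pos with rfl | hm
  · simp
  have hmR : (0 : ℝ) < m := by exact_mod_cast hm
  have h := pow_div_factorial_le_exp _ hmR.le m
  rw [← exp_one_pow, div_le_iff₀ (by positivity)] at h
  rwa [div_pow, div_mul_eq_mul_div, one_le_div (by positivity)]

theorem Eg_bound_general (m N : ℕ) (t : ℝ) (ht : |t| < 1) :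
    (m = 0 → |Eg t N 0| ≤ |t| ^ (N + 1) / (1 - |t|) ^ (N + 2)) ∧
    (1 ≤ m → |Eg t N m| ≤
      (2 * Real.exp 1 / m) ^ m * (m.factorial : ℝ) * ((m + N + 1).choose m : ℝ) *
        |t| ^ (N + 1) / (1 - |t|) ^ (m + N + 2)) := by
  refine ⟨fun _ ↦ by simpa using abs_Eg_le t N 0 ht, fun _ ↦ ?_⟩
  have hconst : 1 ≤ (2 * exp 1 / m) ^ m * m.factorial :=
    (one_le_exp_one_div_pow_mul_factorial m).trans <| by
      gcongr
      linarith [exp_pos 1]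
  calc |Eg t N m| ≤ (m + N + 1).choose m * |t| ^ (N + 1) / (1 - |t|) ^ (m + N + 2) :=
        abs_Eg_le t N m ht
    _ ≤ _ := by
        rw [mul_assoc ((2 * exp 1 / m) ^ m * (m.factorial : ℝ))]
        exact div_le_div_of_nonneg_right (le_mul_of_one_le_left (by positivity) hconst)
          (by positivity)

/-- Bounds for the tail of the series of `(1/m!) g⁽ᵐ⁾(t)` with `g(t) = log(1+t)/t`:
`|E_g(t;N,0)| ≤ |t|^{N+1}/(1-|t|)^{N+2}` and, for `m ≥ 1`,
`|E_g(t;N,m)| ≤ (2e/m)^m m! C(m+N+1,m) |t|^{N+1}/(1-|t|)^{m+N+2}`. -/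
theorem Eg_bound (m N : ℕ) (hmN : m ≤ N) (t : ℝ) (ht : |t| < 1) :
    (m = 0 → |Eg t N 0| ≤ |t| ^ (N + 1) / (1 - |t|) ^ (N + 2)) ∧
    (1 ≤ m → |Eg t N m| ≤
      (2 * Real.exp 1 / m) ^ m * (m.factorial : ℝ) * ((m + N + 1).choose m : ℝ) *
        |t| ^ (N + 1) / (1 - |t|) ^ (m + N + 2)) :=
  Eg_bound_general m N t ht
end
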